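/- Let Z be a real random variable Gaussian with mean μ̃ and variance σ̃² ≥ 0. Then for all u ∈ ℝ, |E[σ(u + Z)] − σ((u + μ̃)/√(1 + (π/8)σ̃²))| ≤ 2·‖δ‖_∞. -/

import Mathlib

open MeasureTheory ProbabilityTheory Real
open scoped NNReal

/-- The standard normal CDF `Φ(t) = (2π)^{-1/2} ∫_{-∞}^t e^{-s²/2} ds`. -/
noncomputable def stdNormalCDF (t : ℝ) : ℝ :=
  ∫ s in Set.Iic t, Real.exp (-s ^ 2 / 2) / Real.sqrt (2 * Real.pi)

/-- The logistic (sigmoid) function `σ(t) = 1/(1 + e^{-t})`. -/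
noncomputable def logisticFn (t : ℝ) : ℝ := 1 / (1 + Real.exp (-t))

/-- `δ(t) = Φ(t) − σ(√(8/π)·t)`. -/
noncomputable def deltaFn (t : ℝ) : ℝ :=
  stdNormalCDF t - logisticFn (Real.sqrt (8 / Real.pi) * t)

/-!
With `c = √(8/π)`, the definition of `δ` reads `σ(x) = Φ(x/c) − δ(x/c)`, and `Φ(x/c)` is the
distribution function of `W ~ N(0, c²)` at `x`. Averaging over `Z ~ N(μ̃, σ̃²)` independent of
`W` gives `E[P(W ≤ u + Z)] = P(W − Z ≤ u) = Φ(s)` with `s = (u + μ̃)/√(σ̃² + c²)`, and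
`σ(c·s) = Φ(s) − δ(s)` is exactly the logistic value of the claim. What remains is
`δ(s) − E[δ((u + Z)/c)]`.
-/

namespace ProbabilityTheory

lemma measurable_cdf (μ : Measure ℝ) : Measurable (cdf μ) := (monotone_cdf μ).measurable

lemma integral_cdf_add (μ ν : Measure ℝ) [IsProbabilityMeasure μ] [IsProbabilityMeasure ν]
    (u : ℝ) : ∫ x, cdf ν (u + x) ∂μ = cdf (μ.map (-·) ∗ ν) u := by
  have := Measure.isProbabilityMeasure_map (μ := μ) measurable_neg.aemeasurable
  have hshift (x y : ℝ) :
      (Set.Iic u).indicator (1 : ℝ → ℝ) (x + y) = (Set.Iic (u - x)).indicator 1 y := by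
    simp [Set.indicator_apply, le_sub_iff_add_le']
  rw [cdf_eq_real, ← integral_indicator_one measurableSet_Iic,
    integral_conv ((integrable_const 1).indicator measurableSet_Iic)]
  simp_rw [hshift, integral_indicator_one measurableSet_Iic, ← cdf_eq_real]
  rw [integral_map (f := fun x => cdf ν (u - x)) measurable_neg.aemeasurable
    ((measurable_cdf ν).comp (measurable_const_sub u)).aestronglyMeasurable]
  simp_rw [sub_neg_eq_add]

lemma integral_cdf_gaussianReal_add (m₁ m₂ u : ℝ) (v₁ v₂ : ℝ≥0) :
    ∫ x, cdf (gaussianReal m₂ v₂) (u + x) ∂gaussianReal m₁ v₁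
      = cdf (gaussianReal (m₂ - m₁) (v₁ + v₂)) u := by
  rw [integral_cdf_add, gaussianReal_map_neg, gaussianReal_conv_gaussianReal, neg_add_eq_sub]

lemma gaussianReal_map_standardize (m : ℝ) {v : ℝ≥0} (hv : v ≠ 0) :
    (gaussianReal m v).map (fun x => (x - m) / √v) = gaussianReal 0 1 := by
  have hsqrt : (√v : ℝ) ^ 2 = v := Real.sq_sqrt v.coe_nonneg
  have hv' : (v : ℝ) ≠ 0 := by exact_mod_cast hv
  change (gaussianReal m v).map ((· / √v) ∘ (· - m)) = _
  rw [← Measure.map_map (by fun_prop) (by fun_prop), gaussianReal_map_sub_const,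
    gaussianReal_map_div_const, sub_self, zero_div]
  congr 1
  ext
  simp [hsqrt, hv']

end ProbabilityTheory

lemma stdNormalCDF_eq_cdf : stdNormalCDF = cdf (gaussianReal 0 1) := by
  ext t
  rw [cdf_eq_real, measureReal_def, gaussianReal_apply_eq_integral 0 one_ne_zero,
    ENNReal.toReal_ofReal (setIntegral_nonneg measurableSet_Iic
      fun x _ => gaussianPDFReal_nonneg _ _ _)]
  simp only [stdNormalCDF, gaussianPDFReal, NNReal.coe_one, mul_one, sub_zero]
  congr 1 with x
  ring

lemma cdf_gaussianReal (m : ℝ) {v : ℝ≥0} (hv : v ≠ 0) (t : ℝ) :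
    cdf (gaussianReal m v) t = stdNormalCDF ((t - m) / √v) := by
  have hsqrt : 0 < (√v : ℝ) := by simpa [pos_iff_ne_zero] using hv
  have hpre : (fun x => (x - m) / √v) ⁻¹' Set.Iic ((t - m) / √v) = Set.Iic t := by
    ext x; simp [div_le_div_iff_of_pos_right hsqrt]
  rw [stdNormalCDF_eq_cdf, cdf_eq_real, cdf_eq_real, ← gaussianReal_map_standardize m hv,
    map_measureReal_apply (by fun_prop) measurableSet_Iic, hpre]

lemma logisticFn_eq_sigmoid : logisticFn = sigmoid := by
  ext t
  simp [logisticFn, sigmoid_def]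

lemma measurable_deltaFn : Measurable deltaFn := by
  unfold deltaFn
  rw [stdNormalCDF_eq_cdf, logisticFn_eq_sigmoid]
  exact (measurable_cdf _).sub (continuous_sigmoid.measurable.comp (measurable_const_mul _))

lemma abs_deltaFn_le_one (t : ℝ) : |deltaFn t| ≤ 1 := by
  unfold deltaFn
  rw [stdNormalCDF_eq_cdf, logisticFn_eq_sigmoid]
  simpa using abs_sub_le_of_le_of_le (cdf_nonneg _ t) (cdf_le_one _ t)
    (sigmoid_nonneg _) (sigmoid_le_one _)

lemma abs_deltaFn_le_iSup (t : ℝ) : |deltaFn t| ≤ ⨆ s, |deltaFn s| :=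
  le_ciSup (f := fun s => |deltaFn s|)
    ⟨1, by rintro _ ⟨s, rfl⟩; exact abs_deltaFn_le_one s⟩ t

lemma abs_integral_deltaFn_le_iSup {α : Type*} [MeasurableSpace α] (μ : Measure α)
    [IsProbabilityMeasure μ] (g : α → ℝ) :
    |∫ x, deltaFn (g x) ∂μ| ≤ ⨆ s, |deltaFn s| := by
  simpa using norm_integral_le_of_norm_le_const (μ := μ) (f := fun x => deltaFn (g x))
    (ae_of_all _ fun x => (Real.norm_eq_abs _).trans_le (abs_deltaFn_le_iSup (g x)))

lemma logisticFn_sqrt_mul (t : ℝ) :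
    logisticFn (√(8 / π) * t) = stdNormalCDF t - deltaFn t := by
  unfold deltaFn
  ring

lemma logisticFn_eq_cdf_sub_deltaFn (x : ℝ) :
    logisticFn x = cdf (gaussianReal 0 (8 / π).toNNReal) x - deltaFn (x / √(8 / π)) := by
  have hc : √(8 / π) ≠ 0 := by positivity
  rw [cdf_gaussianReal 0 (by simp [pi_pos]), Real.coe_toNNReal _ (by positivity), sub_zero,
    ← logisticFn_sqrt_mul, mul_div_cancel₀ x hc]

lemma integral_logisticFn_add_gaussianReal (m u : ℝ) (v : ℝ≥0) :
    ∫ x, logisticFn (u + x) ∂gaussianReal m v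
      = logisticFn ((u + m) / √(1 + π / 8 * v)) + deltaFn ((u + m) / √(v + 8 / π))
        - ∫ x, deltaFn ((u + x) / √(8 / π)) ∂gaussianReal m v := by
  set w := (8 / π).toNNReal
  have hw : (w : ℝ) = 8 / π := Real.coe_toNNReal _ (by positivity)
  have hsplit (x : ℝ) : logisticFn (u + x)
      = cdf (gaussianReal 0 w) (u + x) - deltaFn ((u + x) / √(8 / π)) :=
    logisticFn_eq_cdf_sub_deltaFn _
  have hint_cdf : Integrable (fun x => cdf (gaussianReal 0 w) (u + x)) (gaussianReal m v) :=
    .of_bound ((measurable_cdf _).comp (measurable_const_add u)).aestronglyMeasurable 1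
      (ae_of_all _ fun x => by simp [abs_of_nonneg (cdf_nonneg _ _), cdf_le_one])
  have hint_delta :
      Integrable (fun x => deltaFn ((u + x) / √(8 / π))) (gaussianReal m v) :=
    .of_bound
      (measurable_deltaFn.comp ((measurable_const_add u).div_const _)).aestronglyMeasurable 1
      (ae_of_all _ fun x => abs_deltaFn_le_one _)
  have hscale : (u + m) / √(1 + π / 8 * v) = √(8 / π) * ((u + m) / √(v + 8 / π)) := by
    rw [show (v : ℝ) + 8 / π = (1 + π / 8 * v) * (8 / π) by field_simp; ring,
      Real.sqrt_mul (by positivity)]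
    field_simp
  simp_rw [hsplit]
  rw [integral_sub hint_cdf hint_delta, integral_cdf_gaussianReal_add,
    cdf_gaussianReal _ (by simp [w, pi_pos]), NNReal.coe_add, hw, hscale, logisticFn_sqrt_mul,
    zero_sub, sub_neg_eq_add]
  ring

theorem logistic_gaussian_expectation_bound_general {Ω : Type*} [MeasurableSpace Ω]
    (P : Measure Ω)
    (Z : Ω → ℝ) (hZ : Measurable Z) (μt : ℝ) (σt2 : ℝ≥0)
    (hdist : P.map Z = gaussianReal μt σt2) (u : ℝ) :
    |(∫ ω, logisticFn (u + Z ω) ∂P) -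
        logisticFn ((u + μt) / Real.sqrt (1 + (Real.pi / 8) * (σt2 : ℝ)))| ≤
      2 * ⨆ t : ℝ, |deltaFn t| := by
  have hcont : Continuous fun x => logisticFn (u + x) :=
    logisticFn_eq_sigmoid ▸ continuous_sigmoid.comp (continuous_const_add u)
  have hlaw : ∫ ω, logisticFn (u + Z ω) ∂P = ∫ x, logisticFn (u + x) ∂gaussianReal μt σt2 := by
    rw [← hdist, integral_map hZ.aemeasurable hcont.aestronglyMeasurable]
  rw [hlaw, integral_logisticFn_add_gaussianReal, add_sub_assoc, add_sub_cancel_left, two_mul]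
  exact (abs_sub _ _).trans
    (add_le_add (abs_deltaFn_le_iSup _) (abs_integral_deltaFn_le_iSup _ _))

/-- Core bound of Theorem 2: if `Z ~ N(μ̃, σ̃²)` (variance `σ̃² ≥ 0`), then for all `u`,
`|E[σ(u + Z)] − σ((u + μ̃)/√(1 + (π/8)σ̃²))| ≤ 2‖δ‖_∞`. -/
theorem logistic_gaussian_expectation_bound {Ω : Type*} [MeasurableSpace Ω]
    (P : Measure Ω) [IsProbabilityMeasure P]
    (Z : Ω → ℝ) (hZ : Measurable Z) (μt : ℝ) (σt2 : ℝ≥0)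
    (hdist : P.map Z = gaussianReal μt σt2) (u : ℝ) :
    |(∫ ω, logisticFn (u + Z ω) ∂P) -
        logisticFn ((u + μt) / Real.sqrt (1 + (Real.pi / 8) * (σt2 : ℝ)))| ≤
      2 * ⨆ t : ℝ, |deltaFn t| :=
  logistic_gaussian_expectation_bound_general P Z hZ μt σt2 hdist u
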